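/- Let n0, n1 ≥ 1 be natural numbers and h ≥ 1. Then the number of binary sequences x in B_{n0,n1} with τ(x) = 2h − 1 is exactly 2 · C(n0 − 1, h − 1) · C(n1 − 1, h − 1), where C(a,b) denotes the binomial coefficient. -/

import Mathlib

/-- The number of jumps `τ(x) = |{i ∈ [n-1] : x_i ≠ x_{i+1}}|` of a binary sequence
`x ∈ {0,1}^n`. -/
def tau {n : ℕ} (x : Fin n → Bool) : ℕ :=
  (Finset.univ.filter (fun i : Fin n =>
    ∃ h : (i : ℕ) + 1 < n, x i ≠ x ⟨(i : ℕ) + 1, h⟩)).card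

/-- `B_{n0,n1}`, the set of binary sequences of length `n0 + n1` with exactly
`n0` zeros and `n1` ones. -/
def Bseq (n0 n1 : ℕ) : Finset (Fin (n0 + n1) → Bool) :=
  Finset.univ.filter (fun x =>
    (Finset.univ.filter (fun i => x i = false)).card = n0 ∧
    (Finset.univ.filter (fun i => x i = true)).card = n1)

/-!
A sequence that starts with `false` and has `t` jumps splits into `t / 2 + 1` runs of zeros
alternating with `(t + 1) / 2` runs of ones, so it is given by a composition of its number of
zeros and one of its number of ones; a composition of `n` into `r` positive parts is counted by
`choose (n - 1) (r - 1)`. Instead of building this bijection we check the count by deleting the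
first letter: the resulting recursion, split by the second letter, is Pascal's rule for
`compositionCount`. Complementing every letter swaps the two counts, so sequences starting with
`true` are counted by the same formula, which for `t = 2h - 1` gives two equal summands.
-/

open Finset

def compositionCount : ℕ → ℕ → ℕ
  | 0, 0 => 1
  | 0, _ + 1 => 0
  | _ + 1, 0 => 0
  | n + 1, r + 1 => n.choose r

theorem compositionCount_succ_succ (n r : ℕ) :
    compositionCount (n + 1) (r + 1) = compositionCount n (r + 1) + compositionCount n r := by
  cases n <;> cases r <;> simp [compositionCount, Nat.choose_succ_succ, add_comm]

theorem compositionCount_of_pos {n : ℕ} (hn : 0 < n) (r : ℕ) :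
    compositionCount n (r + 1) = (n - 1).choose r := by
  obtain ⟨n, rfl⟩ := Nat.exists_eq_add_one_of_ne_zero hn.ne'
  rfl

theorem tau_eq_card_castSucc_ne {n : ℕ} (x : Fin (n + 1) → Bool) :
    tau x = #{i : Fin n | x i.castSucc ≠ x i.succ} := by
  rw [tau, card_filter, card_filter, Fin.sum_univ_castSucc]
  simp [Fin.succ]

theorem tau_cons {n : ℕ} (b : Bool) (y : Fin (n + 1) → Bool) :
    tau (Fin.cons b y : Fin (n + 2) → Bool) = (b ^^ y 0).toNat + tau y := by
  rw [tau_eq_card_castSucc_ne, tau_eq_card_castSucc_ne, card_filter, card_filter, Fin.sum_univ_succ]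
  cases b <;> cases h : y 0 <;> simp [h]

theorem tau_not {n : ℕ} (x : Fin n → Bool) : tau (fun i => !x i) = tau x := by
  simp [tau]

def occurrences {n : ℕ} (b : Bool) (x : Fin n → Bool) : ℕ := #{i | x i = b}

theorem occurrences_cons {n : ℕ} (b c : Bool) (y : Fin n → Bool) :
    occurrences b (Fin.cons c y : Fin (n + 1) → Bool) =
      occurrences b y + if c = b then 1 else 0 := by
  simp only [occurrences, card_filter, Fin.sum_univ_succ, Fin.cons_zero, Fin.cons_succ, add_comm]

theorem occurrences_not {n : ℕ} (b : Bool) (x : Fin n → Bool) :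
    occurrences b (fun i => !x i) = occurrences (!b) x := by
  simp [occurrences, Bool.not_eq_eq_eq_not]

def headedSeqs (n : ℕ) [NeZero n] (b : Bool) (z o t : ℕ) : Finset (Fin n → Bool) :=
  {x | x 0 = b ∧ occurrences false x = z ∧ occurrences true x = o ∧ tau x = t}

theorem card_headedSeqs_true (n : ℕ) [NeZero n] (z o t : ℕ) :
    #(headedSeqs n true z o t) = #(headedSeqs n false o z t) := by
  refine card_nbij' (fun x i => !x i) (fun x i => !x i) ?_ ?_ ?_ ?_ <;>
    intro x hx <;> simp_all [headedSeqs, occurrences_not, tau_not]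

theorem headedSeqs_false_zero (n : ℕ) [NeZero n] (o t : ℕ) :
    headedSeqs n false 0 o t = ∅ := by
  refine eq_empty_of_forall_notMem fun x hx => ?_
  obtain ⟨h0, hz, -⟩ := (mem_filter.mp hx).2
  exact card_ne_zero_of_mem (s := {i | x i = false}) (a := 0) (by simp [h0]) hz

theorem card_headedSeqs_one (z o t : ℕ) :
    #(headedSeqs 1 false z o t) = if z = 1 ∧ o = 0 ∧ t = 0 then 1 else 0 := by
  have hx (x : Fin 1 → Bool) : x 0 = false ↔ x = fun _ => false := by
    simp [funext_iff, Fin.forall_fin_one]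
  have hocc (b : Bool) : occurrences b (fun _ : Fin 1 => false) = if b = false then 1 else 0 := by
    cases b <;> decide
  have key : headedSeqs 1 false z o t =
      if z = 1 ∧ o = 0 ∧ t = 0 then {fun _ => false} else ∅ := by
    ext x
    simp only [headedSeqs, mem_filter, mem_univ, true_and, hx]
    split_ifs with h
    · obtain ⟨rfl, rfl, rfl⟩ := h
      simp only [mem_singleton, and_iff_left_iff_imp]
      rintro rfl
      simp [hocc, tau_eq_card_castSucc_ne]
    · simp only [notMem_empty, iff_false]
      rintro ⟨rfl, rfl, rfl, rfl⟩
      simp [hocc, tau_eq_card_castSucc_ne] at h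
  rw [key]
  split_ifs <;> rfl

theorem card_headedSeqs_false_cons (m z o t : ℕ) :
    #(headedSeqs (m + 2) false (z + 1) o t) = #(headedSeqs (m + 1) false z o t) +
      #{y : Fin (m + 1) → Bool |
        y 0 = true ∧ occurrences false y = z ∧ occurrences true y = o ∧ tau y + 1 = t} := by
  have htail : #(headedSeqs (m + 2) false (z + 1) o t) = #{y : Fin (m + 1) → Bool |
      occurrences false y = z ∧ occurrences true y = o ∧ (y 0).toNat + tau y = t} := by
    refine card_nbij' Fin.tail (fun y => Fin.cons false y) ?_ ?_ ?_ ?_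
    · intro x hx
      cases x using Fin.consCases with
      | cons b y => cases b <;> simp_all [headedSeqs, occurrences_cons, tau_cons]
    · intro y hy
      simp_all [headedSeqs, occurrences_cons, tau_cons]
    · intro x hx
      cases x using Fin.consCases
      simp_all [headedSeqs]
    · intro y _
      simp
  rw [htail, ← card_filter_add_card_filter_not (p := fun y : Fin (m + 1) → Bool => y 0 = false),
    filter_filter, filter_filter]
  congr 2 <;> ext y <;> cases h : y 0 <;> simp [headedSeqs, h, add_comm]

theorem card_headedSeqs_false (n : ℕ) [NeZero n] (z o t : ℕ) (hn : z + o = n) :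
    #(headedSeqs n false z o t) =
      compositionCount z (t / 2 + 1) * compositionCount o ((t + 1) / 2) := by
  obtain ⟨m, rfl⟩ := Nat.exists_eq_add_one_of_ne_zero (NeZero.ne n)
  revert ‹NeZero (m + 1)›
  induction m generalizing z o t with
  | zero =>
    intro
    rw [card_headedSeqs_one]
    obtain ⟨rfl, rfl⟩ | ⟨rfl, rfl⟩ : z = 1 ∧ o = 0 ∨ z = 0 ∧ o = 1 := by omega
    · rcases t with _ | t
      · rfl
      · rw [show (t + 1 + 1) / 2 = t / 2 + 1 by omega]
        simp [compositionCount]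
    · simp [compositionCount]
  | succ m ih =>
    intro
    rcases z with _ | z
    · simp [headedSeqs_false_zero, compositionCount]
    rw [card_headedSeqs_false_cons, ih z o t (by omega)]
    rcases t with _ | t
    · rcases z with _ | z <;> rcases o with _ | o <;> simp [compositionCount]
      omega
    · have htrue : #{y : Fin (m + 1) → Bool | y 0 = true ∧ occurrences false y = z ∧
          occurrences true y = o ∧ tau y + 1 = t + 1} = #(headedSeqs (m + 1) true z o t) := by
        simp [headedSeqs]
      rw [htrue, card_headedSeqs_true, ih o z t (by omega),
        show (t + 1 + 1) / 2 = t / 2 + 1 by omega, compositionCount_succ_succ]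
      ring

theorem mem_Bseq {n0 n1 : ℕ} (x : Fin (n0 + n1) → Bool) :
    x ∈ Bseq n0 n1 ↔ occurrences false x = n0 ∧ occurrences true x = n1 := by
  simp [Bseq, occurrences]

theorem card_Bseq_filter_tau (n0 n1 t : ℕ) [NeZero (n0 + n1)] :
    #{x ∈ Bseq n0 n1 | tau x = t} =
      #(headedSeqs (n0 + n1) false n0 n1 t) + #(headedSeqs (n0 + n1) true n0 n1 t) := by
  rw [← card_filter_add_card_filter_not (p := fun x : Fin (n0 + n1) → Bool => x 0 = false)]
  congr 2 <;> ext x <;> simp [headedSeqs, mem_Bseq] <;> tauto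

theorem stmt_2 (n0 n1 h : ℕ) (h0 : 1 ≤ n0) (h1 : 1 ≤ n1) (hh : 1 ≤ h) :
    ((Bseq n0 n1).filter (fun x => tau x = 2 * h - 1)).card =
      2 * Nat.choose (n0 - 1) (h - 1) * Nat.choose (n1 - 1) (h - 1) := by
  have : NeZero (n0 + n1) := ⟨by omega⟩
  obtain ⟨k, rfl⟩ := Nat.exists_eq_add_one_of_ne_zero (by omega : h ≠ 0)
  rw [card_Bseq_filter_tau, card_headedSeqs_true, card_headedSeqs_false _ _ _ _ rfl,
    card_headedSeqs_false _ _ _ _ (add_comm _ _), show 2 * (k + 1) - 1 = 2 * k + 1 by omega,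
    show (2 * k + 1) / 2 + 1 = k + 1 by omega, show (2 * k + 1 + 1) / 2 = k + 1 by omega,
    compositionCount_of_pos h0, compositionCount_of_pos h1, Nat.add_sub_cancel]
  ring
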